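/- Let I(μ) = ∫_{1}^{μ^{−5/3}} ∫_{1}^{μ^{−5/2} N^{−3/2}} k^{−2} exp(2π√(2k/3)) dk dN for 0 < μ < 1. Then lim_{μ→0⁺} μ^{5/4} · log I(μ) = 2π√(2/3). -/

import Mathlib

open MeasureTheory Filter Real

/-- The continuum approximation to the naive count of AdS₇ vacua, with each `(N, k)`
weighted by the Hardy–Ramanujan asymptotic of `p(k)²` (up to the `1/48` constant). -/
noncomputable def naiveAds7Count (μ : ℝ) : ℝ :=
  ∫ N in (1 : ℝ)..(μ ^ (-(5 : ℝ) / 3)),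
    ∫ k in (1 : ℝ)..(μ ^ (-(5 : ℝ) / 2) * N ^ (-(3 : ℝ) / 2)),
      k ^ (-(2 : ℝ)) * Real.exp (2 * π * Real.sqrt (2 * k / 3))

/-!
Write `F(t) = ∫₁ᵗ k⁻² e^{κ√k} dk` with `κ = 2π√(2/3)` and `K(N) = μ^{-5/2} N^{-3/2}`, so that
`I(μ) = ∫₁^U F(K(N)) dN` with `U = μ^{-5/3}`. Since `K` decreases from `K(1) = μ^{-5/2}` to
`K(U) = 1` and `F` increases on `[1, ∞)`, the integrand is antitone in `N`.

Upper bound: `I ≤ U · F(K(1)) ≤ U · K(1) · e^{κ√K(1)} = μ^{-25/6} e^{κ μ^{-5/4}}`.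
Lower bound: keep only `N ∈ [1, 1 + μ]` and, with `t = K(1 + μ)`, only `k ∈ [(√t - 1)², t]`, an
interval of length at least `1`; this gives `I ≥ μ t⁻² e^{κ(√t - 1)}`, where
`√t = μ^{-5/4}(1 + μ)^{-3/4}`. After taking logarithms and multiplying by `μ^{5/4}`, the
exponentials contribute `κ` and `κ(1 + μ)^{-3/4} - κμ^{5/4} → κ`, while the polynomial prefactors
only contribute terms like `μ^{5/4} log μ → 0`.
-/

open Set Topology intervalIntegral

section Antitone

variable {φ : ℝ → ℝ} {a b : ℝ}

theorem AntitoneOn.integral_le_sub_mul (hab : a ≤ b) (hφ : AntitoneOn φ (Icc a b)) :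
    ∫ x in a..b, φ x ≤ (b - a) * φ a := by
  have hint : IntervalIntegrable φ volume a b := (uIcc_of_le hab ▸ hφ).intervalIntegrable
  calc ∫ x in a..b, φ x ≤ ∫ _ in a..b, φ a :=
        integral_mono_on hab hint intervalIntegrable_const
          fun x hx => hφ ⟨le_rfl, hab⟩ hx hx.1
    _ = (b - a) * φ a := by rw [intervalIntegral.integral_const, smul_eq_mul]

theorem AntitoneOn.sub_mul_le_integral {c : ℝ} (hac : a ≤ c) (hcb : c ≤ b)
    (hφ : AntitoneOn φ (Icc a b)) (hφ_nonneg : ∀ x ∈ Icc a b, 0 ≤ φ x) :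
    (c - a) * φ c ≤ ∫ x in a..b, φ x := by
  have hint : IntervalIntegrable φ volume a b :=
    (uIcc_of_le (hac.trans hcb) ▸ hφ).intervalIntegrable
  calc (c - a) * φ c = ∫ _ in a..c, φ c := by rw [intervalIntegral.integral_const, smul_eq_mul]
    _ ≤ ∫ x in a..c, φ x :=
        integral_mono_on hac intervalIntegrable_const (hint.mono_set (by
          rw [uIcc_of_le hac, uIcc_of_le (hac.trans hcb)]; exact Icc_subset_Icc_right hcb))
          fun x hx => hφ ⟨hx.1, hx.2.trans hcb⟩ ⟨hac, hcb⟩ hx.2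
    _ ≤ ∫ x in a..b, φ x :=
        integral_mono_interval le_rfl hac hcb
          ((ae_restrict_iff' measurableSet_Ioc).mpr
            (.of_forall fun x hx => hφ_nonneg x (Ioc_subset_Icc_self hx))) hint

end Antitone

noncomputable def expSqrtWeight (c k : ℝ) : ℝ := k ^ (-(2 : ℝ)) * exp (c * √k)

noncomputable def expSqrtPrimitive (c t : ℝ) : ℝ := ∫ k in (1 : ℝ)..t, expSqrtWeight c k

namespace expSqrtWeight

theorem nonneg (c : ℝ) {k : ℝ} (hk : 0 ≤ k) : 0 ≤ expSqrtWeight c k := by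
  unfold expSqrtWeight; positivity

theorem continuousOn (c : ℝ) : ContinuousOn (expSqrtWeight c) (Ioi 0) :=
  (continuousOn_id.rpow_const fun _ hk => Or.inl (ne_of_gt hk)).mul (by fun_prop)

theorem intervalIntegrable (c : ℝ) {a b : ℝ} (ha : 0 < a) (hb : 0 < b) :
    IntervalIntegrable (expSqrtWeight c) volume a b :=
  ((continuousOn c).mono fun _ hk => lt_of_lt_of_le (lt_min ha hb) hk.1).intervalIntegrable

end expSqrtWeight

namespace expSqrtPrimitive

theorem nonneg (c : ℝ) {t : ℝ} (ht : 1 ≤ t) : 0 ≤ expSqrtPrimitive c t :=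
  integral_nonneg ht fun _ hk => expSqrtWeight.nonneg c (zero_le_one.trans hk.1)

theorem monotoneOn (c : ℝ) : MonotoneOn (expSqrtPrimitive c) (Ici 1) := fun _ hs _ _ hst =>
  integral_mono_interval le_rfl hs hst
    ((ae_restrict_iff' measurableSet_Ioc).mpr
      (.of_forall fun _ hk => expSqrtWeight.nonneg c (zero_le_one.trans hk.1.le)))
    (expSqrtWeight.intervalIntegrable c one_pos (one_pos.trans_le (le_trans hs hst)))

theorem le_mul_exp {c t : ℝ} (hc : 0 ≤ c) (ht : 1 ≤ t) :
    expSqrtPrimitive c t ≤ t * exp (c * √t) := by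
  have hweight : ∀ k ∈ Icc 1 t, expSqrtWeight c k ≤ exp (c * √t) := fun k hk => by
    have hk2 : k ^ (-(2 : ℝ)) ≤ 1 := rpow_le_one_of_one_le_of_nonpos hk.1 (by norm_num)
    have hexp : exp (c * √k) ≤ exp (c * √t) := by gcongr; exact hk.2
    exact (mul_le_mul hk2 hexp (exp_pos _).le zero_le_one).trans_eq (one_mul _)
  calc expSqrtPrimitive c t ≤ ∫ _ in (1 : ℝ)..t, exp (c * √t) :=
        integral_mono_on ht (expSqrtWeight.intervalIntegrable c one_pos (by linarith))
          intervalIntegrable_const hweight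
    _ ≤ t * exp (c * √t) := by
        rw [intervalIntegral.integral_const, smul_eq_mul]; gcongr; linarith

theorem rpow_neg_two_mul_exp_le {c t : ℝ} (hc : 0 ≤ c) (ht : 4 ≤ t) :
    t ^ (-(2 : ℝ)) * exp (c * (√t - 1)) ≤ expSqrtPrimitive c t := by
  obtain ⟨y, hy, rfl⟩ : ∃ y, 2 ≤ y ∧ y ^ 2 = t :=
    ⟨√t, (le_sqrt (by norm_num) (by linarith)).mpr (by linarith), sq_sqrt (by linarith)⟩
  rw [sqrt_sq (by linarith)]
  have h1 : 1 ≤ (y - 1) ^ 2 := by nlinarith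
  have hle : (y - 1) ^ 2 ≤ y ^ 2 := by nlinarith
  have hweight : ∀ k ∈ Icc ((y - 1) ^ 2) (y ^ 2),
      (y ^ 2) ^ (-(2 : ℝ)) * exp (c * (y - 1)) ≤ expSqrtWeight c k := fun k hk => by
    have hk0 : 0 < k := by linarith [hk.1]
    have hsqrt : y - 1 ≤ √k := (le_sqrt (by linarith) hk0.le).mpr hk.1
    exact mul_le_mul (rpow_le_rpow_of_nonpos hk0 hk.2 (by norm_num))
      (exp_le_exp.mpr (mul_le_mul_of_nonneg_left hsqrt hc)) (exp_pos _).le (by positivity)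
  calc (y ^ 2) ^ (-(2 : ℝ)) * exp (c * (y - 1))
      ≤ (y ^ 2 - (y - 1) ^ 2) * ((y ^ 2) ^ (-(2 : ℝ)) * exp (c * (y - 1))) :=
        le_mul_of_one_le_left (by positivity) (by nlinarith)
    _ = ∫ _ in (y - 1) ^ 2..y ^ 2, (y ^ 2) ^ (-(2 : ℝ)) * exp (c * (y - 1)) := by
        rw [intervalIntegral.integral_const, smul_eq_mul]
    _ ≤ ∫ k in (y - 1) ^ 2..y ^ 2, expSqrtWeight c k :=
        integral_mono_on hle intervalIntegrable_const
          (expSqrtWeight.intervalIntegrable c (by linarith) (by linarith)) hweight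
    _ ≤ expSqrtPrimitive c (y ^ 2) :=
        integral_mono_interval h1 hle le_rfl
          ((ae_restrict_iff' measurableSet_Ioc).mpr
            (.of_forall fun _ hk => expSqrtWeight.nonneg c (zero_le_one.trans hk.1.le)))
          (expSqrtWeight.intervalIntegrable c one_pos (by linarith))

end expSqrtPrimitive

local notation "κ" => 2 * π * √(2 / 3)

/-- The largest `k` allowed at `N` by the Kaluza–Klein cutoff `μ`. -/
noncomputable def kkCutoff (μ N : ℝ) : ℝ := μ ^ (-(5 : ℝ) / 2) * N ^ (-(3 : ℝ) / 2)

namespace kkCutoff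

variable {μ : ℝ}

theorem antitoneOn (hμ : 0 < μ) : AntitoneOn (kkCutoff μ) (Ioi 0) := fun _ hN _ _ hNN' =>
  mul_le_mul_of_nonneg_left (rpow_le_rpow_of_nonpos hN hNN' (by norm_num)) (by positivity)

theorem one_le (hμ : 0 < μ) {N : ℝ} (hN : 0 < N) (hNU : N ≤ μ ^ (-(5 : ℝ) / 3)) :
    1 ≤ kkCutoff μ N := by
  have hcut : kkCutoff μ (μ ^ (-(5 : ℝ) / 3)) = 1 := by
    rw [kkCutoff, ← rpow_mul hμ.le, ← rpow_add hμ]; norm_num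
  exact hcut.symm.le.trans (antitoneOn hμ hN (hN.trans_le hNU) hNU)

theorem sqrt_eq (hμ : 0 < μ) {N : ℝ} (hN : 0 < N) :
    √(kkCutoff μ N) = μ ^ (-(5 : ℝ) / 4) * N ^ (-(3 : ℝ) / 4) := by
  rw [kkCutoff, sqrt_mul (by positivity), sqrt_eq_rpow, sqrt_eq_rpow, ← rpow_mul hμ.le,
    ← rpow_mul hN.le]
  norm_num

theorem log_eq (hμ : 0 < μ) {N : ℝ} (hN : 0 < N) :
    log (kkCutoff μ N) = -(5 / 2) * log μ - 3 / 2 * log N := by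
  rw [kkCutoff, log_mul (by positivity) (by positivity), log_rpow hμ, log_rpow hN]; ring

theorem four_le_one_add (hμ0 : 0 < μ) (hμ : μ ≤ 1 / 4) : 4 ≤ kkCutoff μ (1 + μ) := by
  have hμ2 : 16 ≤ μ ^ (-(5 : ℝ) / 2) :=
    calc (16 : ℝ) ≤ (μ ^ 2)⁻¹ := by
          rw [le_inv_comm₀ (by norm_num) (by positivity)]; nlinarith
      _ = μ ^ (-(2 : ℝ)) := by rw [rpow_neg hμ0.le, rpow_two]
      _ ≤ μ ^ (-(5 : ℝ) / 2) := rpow_le_rpow_of_exponent_ge hμ0 (by linarith) (by norm_num)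
  have h1μ : 16 / 25 ≤ (1 + μ) ^ (-(3 : ℝ) / 2) :=
    calc (16 / 25 : ℝ) ≤ ((1 + μ) ^ 2)⁻¹ := by
          rw [le_inv_comm₀ (by norm_num) (by positivity)]; nlinarith
      _ = (1 + μ) ^ (-(2 : ℝ)) := by rw [rpow_neg (by positivity), rpow_two]
      _ ≤ (1 + μ) ^ (-(3 : ℝ) / 2) := rpow_le_rpow_of_exponent_le (by linarith) (by norm_num)
  rw [kkCutoff]; nlinarith

end kkCutoff

theorem naiveAds7Count_eq_integral (μ : ℝ) :
    naiveAds7Count μ =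
      ∫ N in (1 : ℝ)..μ ^ (-(5 : ℝ) / 3), expSqrtPrimitive κ (kkCutoff μ N) := by
  have h : ∀ k : ℝ, √(2 * k / 3) = √(2 / 3) * √k := fun k => by
    rw [← sqrt_mul (by norm_num)]; ring_nf
  simp only [naiveAds7Count, expSqrtPrimitive, expSqrtWeight, kkCutoff, h, mul_assoc]

theorem antitoneOn_expSqrtPrimitive_kkCutoff (c : ℝ) {μ : ℝ} (hμ : 0 < μ) :
    AntitoneOn (fun N => expSqrtPrimitive c (kkCutoff μ N)) (Icc 1 (μ ^ (-(5 : ℝ) / 3))) :=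
  fun _ hN _ hN' hNN' =>
    have hN0 := one_pos.trans_le hN.1
    have hN0' := one_pos.trans_le hN'.1
    expSqrtPrimitive.monotoneOn c (kkCutoff.one_le hμ hN0' hN'.2) (kkCutoff.one_le hμ hN0 hN.2)
      (kkCutoff.antitoneOn hμ hN0 hN0' hNN')

theorem naiveAds7Count_le {μ : ℝ} (hμ0 : 0 < μ) (hμ1 : μ ≤ 1) :
    naiveAds7Count μ ≤ μ ^ (-(25 : ℝ) / 6) * exp (κ * μ ^ (-(5 : ℝ) / 4)) := by
  have hU : 1 ≤ μ ^ (-(5 : ℝ) / 3) := one_le_rpow_of_pos_of_le_one_of_nonpos hμ0 hμ1 (by norm_num)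
  have hM : 1 ≤ kkCutoff μ 1 := kkCutoff.one_le hμ0 one_pos hU
  rw [naiveAds7Count_eq_integral]
  calc _ ≤ (μ ^ (-(5 : ℝ) / 3) - 1) * expSqrtPrimitive κ (kkCutoff μ 1) :=
        (antitoneOn_expSqrtPrimitive_kkCutoff κ hμ0).integral_le_sub_mul hU
    _ ≤ μ ^ (-(5 : ℝ) / 3) * (kkCutoff μ 1 * exp (κ * √(kkCutoff μ 1))) := by
        gcongr
        · exact expSqrtPrimitive.nonneg κ hM
        · linarith
        · exact expSqrtPrimitive.le_mul_exp (by positivity) hM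
    _ = μ ^ (-(25 : ℝ) / 6) * exp (κ * μ ^ (-(5 : ℝ) / 4)) := by
        rw [kkCutoff.sqrt_eq hμ0 one_pos, kkCutoff, one_rpow, one_rpow, mul_one, mul_one,
          ← mul_assoc, ← rpow_add hμ0]
        norm_num

theorem le_naiveAds7Count {μ : ℝ} (hμ0 : 0 < μ) (hμ : μ ≤ 1 / 4) :
    μ * (kkCutoff μ (1 + μ) ^ (-(2 : ℝ)) * exp (κ * (√(kkCutoff μ (1 + μ)) - 1))) ≤
      naiveAds7Count μ := by
  have hU : 1 + μ ≤ μ ^ (-(5 : ℝ) / 3) := by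
    have : μ⁻¹ ≤ μ ^ (-(5 : ℝ) / 3) := by
      simpa [rpow_neg_one] using
        rpow_le_rpow_of_exponent_ge hμ0 (by linarith) (by norm_num : -(5 : ℝ) / 3 ≤ -1)
    have : 4 ≤ μ⁻¹ := by rw [le_inv_comm₀ (by norm_num) hμ0]; linarith
    linarith
  have h4 := kkCutoff.four_le_one_add hμ0 hμ
  rw [naiveAds7Count_eq_integral]
  calc _ ≤ (1 + μ - 1) * expSqrtPrimitive κ (kkCutoff μ (1 + μ)) := by
        rw [add_sub_cancel_left]
        gcongr
        exact expSqrtPrimitive.rpow_neg_two_mul_exp_le (by positivity) h4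
    _ ≤ _ := (antitoneOn_expSqrtPrimitive_kkCutoff κ hμ0).sub_mul_le_integral (by linarith) hU
        fun N hN => expSqrtPrimitive.nonneg κ (kkCutoff.one_le hμ0 (one_pos.trans_le hN.1) hN.2)

theorem rpow_mul_log_naiveAds7Count_le {μ : ℝ} (hμ0 : 0 < μ) (hμ : μ ≤ 1 / 4) :
    μ ^ ((5 : ℝ) / 4) * log (naiveAds7Count μ) ≤ κ - 25 / 6 * (log μ * μ ^ ((5 : ℝ) / 4)) := by
  have hK : 0 < kkCutoff μ (1 + μ) := by unfold kkCutoff; positivity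
  have hpos : 0 < naiveAds7Count μ := lt_of_lt_of_le (by positivity) (le_naiveAds7Count hμ0 hμ)
  have hlog := log_le_log hpos (naiveAds7Count_le hμ0 (by linarith))
  rw [log_mul (by positivity) (by positivity), log_rpow hμ0, log_exp] at hlog
  have hinv : μ ^ ((5 : ℝ) / 4) * μ ^ (-(5 : ℝ) / 4) = 1 := by rw [← rpow_add hμ0]; norm_num
  calc _ ≤ μ ^ ((5 : ℝ) / 4) * (-(25 : ℝ) / 6 * log μ + κ * μ ^ (-(5 : ℝ) / 4)) := by gcongr
    _ = _ := by linear_combination κ * hinv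

theorem le_rpow_mul_log_naiveAds7Count {μ : ℝ} (hμ0 : 0 < μ) (hμ : μ ≤ 1 / 4) :
    6 * (log μ * μ ^ ((5 : ℝ) / 4)) + (3 * (μ ^ ((5 : ℝ) / 4) * log (1 + μ)) +
        κ * ((1 + μ) ^ (-(3 : ℝ) / 4) - μ ^ ((5 : ℝ) / 4))) ≤
      μ ^ ((5 : ℝ) / 4) * log (naiveAds7Count μ) := by
  have hK : 0 < kkCutoff μ (1 + μ) := by unfold kkCutoff; positivity
  have hlog := log_le_log (by positivity) (le_naiveAds7Count hμ0 hμ)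
  rw [log_mul hμ0.ne' (by positivity), log_mul (by positivity) (by positivity), log_rpow hK,
    log_exp, kkCutoff.log_eq hμ0 (by positivity), kkCutoff.sqrt_eq hμ0 (by positivity)] at hlog
  have hinv : μ ^ ((5 : ℝ) / 4) * μ ^ (-(5 : ℝ) / 4) = 1 := by rw [← rpow_add hμ0]; norm_num
  calc _ = μ ^ ((5 : ℝ) / 4) * (log μ + -2 * (-(5 / 2) * log μ - 3 / 2 * log (1 + μ)) +
        κ * (μ ^ (-(5 : ℝ) / 4) * (1 + μ) ^ (-(3 : ℝ) / 4) - 1)) := by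
        linear_combination -κ * (1 + μ) ^ (-(3 : ℝ) / 4) * hinv
    _ ≤ _ := mul_le_mul_of_nonneg_left (by linarith) (by positivity)

/-- The naive count grows like `exp(2π√(2/3) μ^{−5/4})` up to subexponential factors:
`lim_{μ→0⁺} μ^{5/4} log I(μ) = 2π√(2/3)`. -/
theorem naive_ads7_count_log :
    Tendsto (fun μ : ℝ => μ ^ ((5 : ℝ) / 4) * Real.log (naiveAds7Count μ))
      (nhdsWithin 0 (Set.Ioi 0)) (nhds (2 * π * Real.sqrt (2 / 3))) := by
  have hlog : Tendsto (fun μ : ℝ => log μ * μ ^ ((5 : ℝ) / 4)) (𝓝[>] 0) (𝓝 0) :=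
    tendsto_log_mul_rpow_nhdsGT_zero (by norm_num)
  have hcont : ContinuousAt (fun μ : ℝ => 3 * (μ ^ ((5 : ℝ) / 4) * log (1 + μ)) +
      κ * ((1 + μ) ^ (-(3 : ℝ) / 4) - μ ^ ((5 : ℝ) / 4))) 0 := by
    fun_prop (disch := norm_num)
  have hlower := (hlog.const_mul 6).add (hcont.tendsto.mono_left nhdsWithin_le_nhds)
  have hupper := (hlog.const_mul (25 / 6)).const_sub κ
  simp only [mul_zero, zero_add, sub_zero, add_zero, one_rpow, log_one,
    zero_rpow (by norm_num : (5 : ℝ) / 4 ≠ 0), mul_one] at hlower hupper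
  have hsmall : ∀ᶠ μ : ℝ in 𝓝[>] 0, μ ∈ Ioc 0 (1 / 4) := Ioc_mem_nhdsGT (by norm_num)
  refine tendsto_of_tendsto_of_tendsto_of_le_of_le' hlower hupper ?_ ?_
  · exact hsmall.mono fun μ hμ => le_rpow_mul_log_naiveAds7Count hμ.1 hμ.2
  · exact hsmall.mono fun μ hμ => rpow_mul_log_naiveAds7Count_le hμ.1 hμ.2
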